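/- (Combing and cabling commute, positive looping case) In the Artin braid group B_{m+n}, for every 1 ≤ k ≤ m−1 and every 1 ≤ q ≤ n, pushing the positive looping of a q-strand cable around the k-th fixed strand through the fixed crossing Σ_k yields the positive looping of the cable around the (k+1)-st fixed strand; explicitly: Σ_k · ( ∏_{l=0}^{q−1} λ_l a_k λ_l^{−1} ) = ( ∏_{l=0}^{q−1} λ_l a_{k+1} λ_l^{−1} ) · Σ_k, products taken left to right in increasing l. -/

import Mathlib

/-- Defining relations of the Artin braid group on `N` strands, with generators
indexed by `Fin (N-1)` (index `s : Fin (N-1)` corresponds to the 1-based generator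
`σ_{s+1}`): the far commutation relations and the braid relations. -/
def braidRels (N : ℕ) : Set (FreeGroup (Fin (N - 1))) :=
  {x | ∃ s t : Fin (N - 1), (s : ℕ) + 2 ≤ (t : ℕ) ∧
      x = FreeGroup.of s * FreeGroup.of t * (FreeGroup.of s)⁻¹ * (FreeGroup.of t)⁻¹} ∪
  {x | ∃ s t : Fin (N - 1), (s : ℕ) + 1 = (t : ℕ) ∧
      x = FreeGroup.of s * FreeGroup.of t * FreeGroup.of s *
          (FreeGroup.of t)⁻¹ * (FreeGroup.of s)⁻¹ * (FreeGroup.of t)⁻¹}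

/-- The Artin braid group on `N` strands. -/
abbrev BraidGroup (N : ℕ) := PresentedGroup (braidRels N)

/-- The generator `σ_s` (1-based, `1 ≤ s ≤ N-1`); junk value `1` out of range. -/
def sig (N s : ℕ) : BraidGroup N :=
  if h : 1 ≤ s ∧ s ≤ N - 1 then PresentedGroup.of ⟨s - 1, by omega⟩ else 1

/-- The loop element `a_i = σ_m σ_{m-1} ⋯ σ_{i+1} · σ_i² · σ_{i+1}⁻¹ ⋯ σ_m⁻¹`
(so `a_m = σ_m²`) in the braid group on `N` strands, `m` of which are fixed. -/
def loop (N m i : ℕ) : BraidGroup N :=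
  (((List.range (m - i)).map (fun l => sig N (m - l))).prod) * (sig N i) ^ 2 *
    (((List.range (m - i)).map (fun l => sig N (m - l))).prod)⁻¹

/-- `λ_l := σ_{m+l} σ_{m+l-1} ⋯ σ_{m+1}`, with `λ_0 := 1`. -/
def lam (N m l : ℕ) : BraidGroup N :=
  ((List.range l).map (fun t => sig N (m + l - t))).prod

/-- The positive looping `∏_{l=0}^{q-1} λ_l a_j λ_l⁻¹` of a `q`-strand cable of
moving strands around the `j`-th fixed strand. -/
def cable (N m j q : ℕ) : BraidGroup N :=
  ((List.range q).map (fun l => lam N m l * loop N m j * (lam N m l)⁻¹)).prod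

/-!
Conjugation by `Σ_k = σ_k` turns `a_k` into `a_{k+1}`: writing `a_k = P σ_{k+1} σ_k² σ_{k+1}⁻¹ P⁻¹`
and `a_{k+1} = P σ_{k+1}² P⁻¹` with `P = σ_m ⋯ σ_{k+2}`, the generator `σ_k` commutes with `P`,
and the braid relation gives `σ_k σ_{k+1} σ_k² σ_{k+1}⁻¹ = σ_{k+1}² σ_k`. Each `λ_l` only involves
`σ_{m+1}, σ_{m+2}, …`, which commute with `σ_k`, so the identity passes to every factor
`λ_l a_k λ_l⁻¹` of the cable, hence to their product.
-/

theorem SemiconjBy.list_prod_map {M ι : Type*} [Monoid M] {a : M} {f g : ι → M} {L : List ι}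
    (h : ∀ i ∈ L, SemiconjBy a (f i) (g i)) :
    SemiconjBy a (L.map f).prod (L.map g).prod := by
  induction L with
  | nil => exact SemiconjBy.one_right a
  | cons i L ih =>
    simp only [List.map_cons, List.prod_cons]
    exact (h i List.mem_cons_self).mul_right (ih fun j hj => h j (List.mem_cons_of_mem i hj))

theorem SemiconjBy.conj_of_commute {G : Type*} [Group G] {a c x y : G}
    (h : SemiconjBy a x y) (hc : Commute a c) :
    SemiconjBy a (c * x * c⁻¹) (c * y * c⁻¹) :=
  (SemiconjBy.mul_right hc h).mul_right hc.inv_right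

theorem semiconjBy_conj_sq_of_braid {G : Type*} [Group G] {a b : G} (h : a * b * a = b * a * b) :
    SemiconjBy a (b * a ^ 2 * b⁻¹) (b ^ 2) := by
  rw [SemiconjBy, sq, sq]
  calc a * (b * (a * a) * b⁻¹) = (a * b * a) * a * b⁻¹ := by simp only [mul_assoc]
    _ = (b * a * b) * a * b⁻¹ := by rw [h]
    _ = b * (a * b * a) * b⁻¹ := by simp only [mul_assoc]
    _ = b * (b * a * b) * b⁻¹ := by rw [h]
    _ = b * b * a := by group

namespace BraidGroup

variable {N : ℕ}

theorem commute_of {s t : Fin (N - 1)} (h : (s : ℕ) + 2 ≤ t) :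
    Commute (PresentedGroup.of s : BraidGroup N) (PresentedGroup.of t) := by
  have hrel := PresentedGroup.one_of_mem (rels := braidRels N) (Or.inl ⟨s, t, h, rfl⟩)
  simp only [map_mul, map_inv] at hrel
  exact commutatorElement_eq_one_iff_commute.mp hrel

theorem braid_of {s t : Fin (N - 1)} (h : (s : ℕ) + 1 = t) :
    (PresentedGroup.of s * PresentedGroup.of t * PresentedGroup.of s : BraidGroup N) =
      PresentedGroup.of t * PresentedGroup.of s * PresentedGroup.of t := by
  have hrel : FreeGroup.of s * FreeGroup.of t * FreeGroup.of s *
      (FreeGroup.of t * FreeGroup.of s * FreeGroup.of t)⁻¹ ∈ braidRels N :=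
    Or.inr ⟨s, t, h, by group⟩
  have hmk := PresentedGroup.mk_eq_mk_of_mul_inv_mem hrel
  simp only [map_mul] at hmk
  exact hmk

end BraidGroup

open BraidGroup

section Generators

variable {N : ℕ}

theorem sig_commute {s t : ℕ} (h : s + 2 ≤ t) : Commute (sig N s) (sig N t) := by
  unfold sig
  split_ifs
  · exact commute_of (by simp only; omega)
  all_goals first | exact Commute.one_left _ | exact Commute.one_right _

theorem sig_braid {s : ℕ} (hs : 1 ≤ s) (hN : s + 2 ≤ N) :
    sig N s * sig N (s + 1) * sig N s = sig N (s + 1) * sig N s * sig N (s + 1) := by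
  rw [sig, sig, dif_pos ⟨hs, by omega⟩, dif_pos ⟨by omega, by omega⟩]
  exact braid_of (by simp only; omega)

theorem commute_sig_list_prod_map {s : ℕ} {L : List ℕ} {f : ℕ → ℕ}
    (h : ∀ l ∈ L, s + 2 ≤ f l) : Commute (sig N s) (L.map fun l => sig N (f l)).prod :=
  Commute.list_prod_right _ _ <| by
    simpa only [List.mem_map, forall_exists_index, and_imp, forall_apply_eq_imp_iff₂] using
      fun l hl => sig_commute (h l hl)

end Generators

/-- `σ_m σ_{m-1} ⋯ σ_{i+1}`, the word conjugating `σ_i²` into `a_i`. -/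
def sigDesc (N m i : ℕ) : BraidGroup N :=
  ((List.range (m - i)).map fun l => sig N (m - l)).prod

section Loops

variable {N m : ℕ}

theorem loop_eq_sigDesc (i : ℕ) :
    loop N m i = sigDesc N m i * sig N i ^ 2 * (sigDesc N m i)⁻¹ := rfl

theorem sigDesc_eq_mul_sig {i : ℕ} (h : i < m) :
    sigDesc N m i = sigDesc N m (i + 1) * sig N (i + 1) := by
  rw [sigDesc, sigDesc, show m - i = m - (i + 1) + 1 by omega, List.range_succ, List.map_append,
    List.prod_append, List.map_singleton, List.prod_singleton,
    show m - (m - (i + 1)) = i + 1 by omega]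

theorem commute_sig_sigDesc {k i : ℕ} (h : k + 1 ≤ i) : Commute (sig N k) (sigDesc N m i) :=
  commute_sig_list_prod_map fun l hl => by rw [List.mem_range] at hl; omega

theorem commute_sig_lam {k : ℕ} (h : k + 1 ≤ m) (l : ℕ) : Commute (sig N k) (lam N m l) :=
  commute_sig_list_prod_map fun t ht => by rw [List.mem_range] at ht; omega

theorem semiconjBy_sig_loop {k : ℕ} (hk : 1 ≤ k) (hkm : k + 1 ≤ m) (hmN : m < N) :
    SemiconjBy (sig N k) (loop N m k) (loop N m (k + 1)) := by
  have hbraid := semiconjBy_conj_sq_of_braid (sig_braid hk (by omega : k + 2 ≤ N))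
  have hloop : loop N m k =
      sigDesc N m (k + 1) * (sig N (k + 1) * sig N k ^ 2 * (sig N (k + 1))⁻¹) *
        (sigDesc N m (k + 1))⁻¹ := by
    rw [loop_eq_sigDesc, sigDesc_eq_mul_sig (by omega)]
    group
  rw [hloop]
  exact hbraid.conj_of_commute (commute_sig_sigDesc le_rfl)

end Loops

theorem combing_cabling_commute_pos_general (m n k q : ℕ) (hn : 1 ≤ n)
    (hk1 : 1 ≤ k) (hk2 : k ≤ m - 1) :
    sig (m + n) k * cable (m + n) m k q =
      cable (m + n) m (k + 1) q * sig (m + n) k := by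
  have hkm : k + 1 ≤ m := by omega
  have hloop := semiconjBy_sig_loop (N := m + n) hk1 hkm (by omega)
  exact SemiconjBy.list_prod_map fun l _ => hloop.conj_of_commute (commute_sig_lam hkm l)

/-- Combing and cabling commute (positive looping case): pushing the positive
looping of a `q`-strand cable around the `k`-th fixed strand through the fixed
crossing `Σ_k` yields the positive looping around the `(k+1)`-st fixed strand. -/
theorem combing_cabling_commute_pos (m n k q : ℕ) (hm : 2 ≤ m) (hn : 1 ≤ n)
    (hk1 : 1 ≤ k) (hk2 : k ≤ m - 1) (hq1 : 1 ≤ q) (hq2 : q ≤ n) :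
    sig (m + n) k * cable (m + n) m k q =
      cable (m + n) m (k + 1) q * sig (m + n) k :=
  combing_cabling_commute_pos_general m n k q hn hk1 hk2
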